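/- arXiv:math/0409108 — 6 statements merged into one kernel-verified Lean document; each statement's English description precedes it below -/
import Mathlib

section
/- Let L be a modular lattice, let a ∈ L, and let (x_i)_{i∈ℕ} be a strictly decreasing sequence in L. Then it is not the case that both of the sequences (a ⊓ x_i)_{i∈ℕ} and (a ⊔ x_i)_{i∈ℕ} are eventually constant; i.e., at least one of them fails to be eventually constant. -/
/-- In a modular lattice, if `(x i)` is a strictly decreasing sequence and `a` is any
element, then not both `(a ⊓ x i)` and `(a ⊔ x i)` are eventually constant. -/
theorem stmt_1 {L : Type*} [Lattice L] [IsModularLattice L] (a : L)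
    (x : ℕ → L) (hx : StrictAnti x) :
    ¬ ((∃ N, ∀ n ≥ N, a ⊓ x n = a ⊓ x N) ∧ (∃ N, ∀ n ≥ N, a ⊔ x n = a ⊔ x N)) := by
  rintro ⟨⟨N1, h1⟩, ⟨N2, h2⟩⟩
  set M := max N1 N2 with hM
  have hinf : a ⊓ x (M + 1) = a ⊓ x M := by
    rw [h1 (M+1) (le_trans (le_max_left _ _) (Nat.le_succ M)),
      h1 M (le_max_left _ _)]
  have hsup : a ⊔ x (M + 1) = a ⊔ x M := by
    rw [h2 (M+1) (le_trans (le_max_right _ _) (Nat.le_succ M)),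
      h2 M (le_max_right _ _)]
  have hle : x (M + 1) ≤ x M := (hx (Nat.lt_succ_self M)).le
  have : x M = x (M + 1) := by
    calc x M = (a ⊔ x M) ⊓ x M := (inf_eq_right.mpr le_sup_right).symm
    _ = (a ⊔ x (M + 1)) ⊓ x M := by rw [hsup]
    _ = x (M + 1) ⊔ (a ⊓ x M) := by
        rw [sup_comm a, sup_inf_assoc_of_le _ hle]
    _ = x (M + 1) ⊔ (a ⊓ x (M + 1)) := by rw [hinf]
    _ = x (M + 1) := sup_eq_left.mpr inf_le_right
  exact absurd this (hx (Nat.lt_succ_self M)).ne'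
end

section
/- Let L be a bounded modular lattice, let m ∈ L be a coatom, and let (x_i)_{i∈ℕ} be a strictly increasing sequence in L. Then the sequence (m ⊓ x_i)_{i∈ℕ} is not eventually constant. -/
/-- In a bounded modular lattice, if `m` is a coatom and `(x i)` is a strictly
increasing sequence, then `(m ⊓ x i)` is not eventually constant. -/
theorem stmt_4 {L : Type*} [Lattice L] [BoundedOrder L] [IsModularLattice L] {m : L}
    (hm : IsCoatom m) (x : ℕ → L) (hx : StrictMono x) :
    ¬ ∃ N, ∀ n ≥ N, m ⊓ x n = m ⊓ x N := by
  rintro ⟨N, hN⟩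
  have h1 : m ⊓ x (N+1) = m ⊓ x N := hN (N+1) (by omega)
  have h2 : m ⊓ x (N+2) = m ⊓ x N := hN (N+2) (by omega)
  have hlt : x N < x (N+1) := hx (by omega)
  have hlt2 : x (N+1) < x (N+2) := hx (by omega)
  -- x (N+1) is not ≤ m
  have hy : ¬ x (N+1) ≤ m := by
    intro h
    have : m ⊓ x (N+1) = x (N+1) := inf_eq_right.mpr h
    rw [h1] at this
    exact absurd (this ▸ inf_le_right) hlt.not_ge
  have htop : x (N+1) ⊔ m = ⊤ := hm.2 _ (lt_of_le_of_ne le_sup_right (fun h => hy (h ▸ le_sup_left)))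
  have := sup_inf_assoc_of_le (y := m) (x := x (N+1)) (z := x (N+2)) hlt2.le
  rw [htop, top_inf_eq, h2, ← h1] at this
  rw [inf_comm, sup_inf_self] at this
  exact hlt2.ne' this
end

section
/- Let L be a complete modular lattice which is Artinian and radical free, i.e., the infimum of the set of all coatoms of L equals ⊥. Then L is Noetherian. -/
/-!
The elements `x` above which `L` is Noetherian (`WellFoundedGT (Ici x)`) form an inf-closed set:
by the diamond isomorphism `[a ⊓ b, a] ≃ [b, a ⊔ b]`, and because in a modular lattice
`y ↦ (y ⊓ a, y ⊔ a)` is strictly monotone, Noetherianity above `a` and above `b` gives it above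
`a ⊓ b`. The set contains `⊤` and every coatom, so by the Artinian property it has a least
element, which lies below every coatom and hence is `⊥`.
-/

open Set

theorem InfClosed.exists_isLeast {α : Type*} [SemilatticeInf α] [WellFoundedLT α] {s : Set α}
    (hs : InfClosed s) (hne : s.Nonempty) : ∃ a, IsLeast s a := by
  obtain ⟨a, ha, hmin⟩ := WellFounded.has_min wellFounded_lt s hne
  refine ⟨a, ha, fun b hb => ?_⟩
  have hab : a ⊓ b = a := (inf_le_left.lt_or_eq).resolve_left (hmin _ (hs ha hb))
  exact hab ▸ inf_le_right

section Modular

variable {α : Type*} [Lattice α] [IsModularLattice α]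

theorem wellFoundedGT_Ici_of_le {x z : α} (hxz : x ≤ z) [WellFoundedGT (Icc x z)]
    [WellFoundedGT (Ici z)] : WellFoundedGT (Ici x) :=
  StrictMono.wellFoundedGT (f := fun y : Ici x =>
      ((⟨y ⊓ z, le_inf y.2 hxz, inf_le_right⟩ : Icc x z), (⟨y ⊔ z, le_sup_right⟩ : Ici z)))
    fun _ _ h => strictMono_inf_prod_sup (z := z) (Subtype.coe_lt_coe.2 h)

theorem wellFoundedGT_Ici_inf {a b : α} [WellFoundedGT (Ici a)] [WellFoundedGT (Ici b)] :
    WellFoundedGT (Ici (a ⊓ b)) :=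
  have : WellFoundedGT (Icc b (a ⊔ b)) :=
    StrictMono.wellFoundedGT (f := fun y : Icc b (a ⊔ b) => (⟨y, y.2.1⟩ : Ici b)) fun _ _ h => h
  have : WellFoundedGT (Icc (a ⊓ b) a) := (infIccOrderIsoIccSup a b).strictMono.wellFoundedGT
  wellFoundedGT_Ici_of_le inf_le_left

theorem infClosed_setOf_wellFoundedGT_Ici : InfClosed {x : α | WellFoundedGT (Ici x)} :=
  fun _ ha _ hb => @wellFoundedGT_Ici_inf _ _ _ _ _ ha hb

end Modular

theorem IsCoatom.wellFoundedGT_Ici {α : Type*} [PartialOrder α] [OrderTop α] {m : α}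
    (hm : IsCoatom m) : WellFoundedGT (Set.Ici m) :=
  have : Finite (Set.Ici m) := ((toFinite {⊤, m}).subset fun _ hy => hm.le_iff.1 hy).to_subtype
  inferInstance

theorem wellFoundedGT_Ici_top {α : Type*} [PartialOrder α] [OrderTop α] :
    WellFoundedGT (Ici (⊤ : α)) := by
  rw [Ici_top]
  infer_instance

/-- A complete modular lattice that is Artinian and radical free (the infimum of all
coatoms is `⊥`) is Noetherian. -/
theorem stmt_6 {L : Type*} [CompleteLattice L] [IsModularLattice L]
    (hart : WellFounded ((· < ·) : L → L → Prop))
    (hrad : sInf {m : L | IsCoatom m} = ⊥) :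
    WellFounded ((· > ·) : L → L → Prop) := by
  have : WellFoundedLT L := ⟨hart⟩
  obtain ⟨a, ha, ha_least⟩ :=
    (infClosed_setOf_wellFoundedGT_Ici (α := L)).exists_isLeast ⟨⊤, wellFoundedGT_Ici_top⟩
  have ha_bot : a = ⊥ :=
    le_bot_iff.1 <| hrad ▸ le_sInf fun m hm => ha_least (IsCoatom.wellFoundedGT_Ici hm)
  subst ha_bot
  have : WellFoundedGT (Ici (⊥ : L)) := ha
  exact (StrictMono.wellFoundedGT (f := fun x : L => (⟨x, bot_le⟩ : Ici (⊥ : L)))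
    fun _ _ h => h).wf
end

section
/- Let L be a complete modular lattice which is Artinian. Define the iterated radical r : ℕ → L by r(0) = ⊤ and r(n+1) = the infimum of the set of all coatoms of the interval [⊥, r(n)], i.e., the infimum of { m ∈ L : m < r(n) and there is no x with m < x < r(n) }. If there exists n ∈ ℕ with r(n) = ⊥ (i.e., L is hyper-radical free), then L is Noetherian. -/
/-!
Between two consecutive radicals the interval `[r (n+1), r n]` is Noetherian: since the
lattice is Artinian, `r (n+1)` is already the meet of finitely many coatoms of `[⊥, r n]`,
and by modularity meeting any `c ≤ r n` with a coatom `m` goes down at most one step: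
`[c ⊓ m, c]` has length at most one. In a modular lattice Noetherian intervals `[a, b]` and
`[b, c]` glue to a Noetherian `[a, c]`, so `[r n, ⊤]` is Noetherian for every `n`, and
`r n = ⊥` for some `n` finishes the proof.
-/

open Set

section Lattice

variable {L : Type*} [Lattice L] [IsModularLattice L] {a b c m t : L}

theorem wellFoundedGT_Icc_trans (hab : a ≤ b) (hbc : b ≤ c) [WellFoundedGT (Icc a b)]
    [WellFoundedGT (Icc b c)] : WellFoundedGT (Icc a c) :=
  StrictMono.wellFoundedGT
    (f := fun x : Icc a c ↦ ((⟨x ⊓ b, le_inf x.2.1 hab, inf_le_right⟩ : Icc a b),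
      (⟨x ⊔ b, le_sup_right, sup_le x.2.2 hbc⟩ : Icc b c)))
    fun _ _ hxy ↦ strictMono_inf_prod_sup (Subtype.coe_lt_coe.2 hxy)

theorem finite_Icc_inf_of_covBy (hct : c ≤ t) (hmt : m ⋖ t) : (Icc (c ⊓ m) c).Finite := by
  rcases hmt.eq_or_eq le_sup_left (sup_le hmt.le hct) with hsup | hsup
  · simp [inf_eq_left.2 (sup_eq_left.1 hsup)]
  · rw [inf_comm, (inf_covBy_of_covBy_sup_left (hsup ▸ hmt)).Icc_eq]
    exact toFinite _

end Lattice

theorem wellFoundedGT_Icc_inf_sInf_covBy {L : Type*} [CompleteLattice L] [IsModularLattice L]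
    [WellFoundedLT L] (t : L) : WellFoundedGT (Icc (t ⊓ sInf {m | m ⋖ t}) t) := by
  set U : Set L := {x | t ⊓ sInf {m | m ⋖ t} ≤ x ∧ x ≤ t ∧ WellFoundedGT (Icc x t)}
  have htU : t ∈ U := ⟨inf_le_left, le_rfl, by rw [Icc_self]; infer_instance⟩
  obtain ⟨u, ⟨hru, hut, hwf⟩, hmin⟩ := wellFounded_lt.has_min U ⟨t, htU⟩
  have hu_le : ∀ m, m ⋖ t → u ≤ m := by
    intro m hmt
    have : Finite (Icc (u ⊓ m) u) := (finite_Icc_inf_of_covBy hut hmt).to_subtype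
    have hum : u ⊓ m ∈ U :=
      ⟨le_inf hru (inf_le_right.trans (sInf_le hmt)), inf_le_left.trans hut,
        wellFoundedGT_Icc_trans inf_le_left hut⟩
    exact inf_eq_left.1 (inf_le_left.eq_of_not_lt (hmin _ hum))
  rwa [← le_antisymm hru (le_inf hut (le_sInf hu_le))] at hwf

/-- A complete modular Artinian lattice which is hyper-radical free is Noetherian.
Here `r 0 = ⊤` and `r (n+1)` is the infimum, inside the interval `[⊥, r n]`, of the
set of coatoms of that interval (so `r (n+1) = r n` if there are no such coatoms). -/
theorem stmt_7 {L : Type*} [CompleteLattice L] [IsModularLattice L]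
    (hart : WellFounded ((· < ·) : L → L → Prop))
    (r : ℕ → L) (h0 : r 0 = ⊤)
    (hsucc : ∀ n, r (n + 1) = r n ⊓ sInf {m : L | m < r n ∧ ¬ ∃ x, m < x ∧ x < r n})
    (hfree : ∃ n, r n = ⊥) :
    WellFounded ((· > ·) : L → L → Prop) := by
  have : WellFoundedLT L := ⟨hart⟩
  have hstep (n : ℕ) : r (n + 1) = r n ⊓ sInf {m | m ⋖ r n} := by
    simpa only [CovBy, not_exists, not_and] using hsucc n
  have hupper (n : ℕ) : WellFoundedGT (Icc (r n) ⊤) := by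
    induction n with
    | zero => rw [h0, Icc_self]; infer_instance
    | succ n ih =>
      have := wellFoundedGT_Icc_inf_sInf_covBy (r n)
      rw [← hstep n] at this
      exact wellFoundedGT_Icc_trans ((hstep n).trans_le inf_le_left) le_top
  obtain ⟨N, hN⟩ := hfree
  have := hupper N
  rw [hN] at this
  exact (StrictMono.wellFoundedGT (f := fun x : L ↦ (⟨x, bot_le, le_top⟩ : Icc (⊥ : L) ⊤))
    fun _ _ h ↦ h).wf
end

section
/- Let L be a complete modular lattice which is Noetherian. Define the iterated socle s : ℕ → L by s(0) = ⊥ and s(n+1) = the supremum of the set of all atoms of the interval [s(n), ⊤], i.e., the supremum of { m ∈ L : s(n) < m and there is no x with s(n) < x < m }. If there exists n ∈ ℕ with s(n) = ⊤ (i.e., L is hyper-semiatomic), then L is Artinian. -/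
/-!
Since `L` is Noetherian, every element is compact, so the join of the atoms of `[s n, ⊤]` is
already the join of finitely many of them; adjoining one atom at a time moves up by at most a
cover, so each interval `[s n, s (n + 1)]` has finite length. In a modular lattice Artinian
intervals `[a, c]` and `[c, b]` glue to an Artinian interval `[a, b]`, because
`x ↦ (x ⊓ c, x ⊔ c)` is strictly monotone. Hence `[⊥, s n] = [⊥, ⊤]` is Artinian.
-/

section Interval

variable {L : Type*}

lemma WCovBy.wellFoundedLT_Icc [PartialOrder L] {a b : L} (h : a ⩿ b) :
    WellFoundedLT (Set.Icc a b) := by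
  have : Finite (Set.Icc a b) := by rw [h.Icc_eq]; exact Set.toFinite _
  exact Finite.to_wellFoundedLT

variable [Lattice L] [IsModularLattice L]

lemma wellFoundedLT_Icc_trans {a b c : L} (hac : a ≤ c) (hcb : c ≤ b)
    [WellFoundedLT (Set.Icc a c)] [WellFoundedLT (Set.Icc c b)] :
    WellFoundedLT (Set.Icc a b) :=
  StrictMono.wellFoundedLT (f := fun x : Set.Icc a b =>
      ((⟨x ⊓ c, le_inf x.2.1 hac, inf_le_right⟩ : Set.Icc a c),
        (⟨x ⊔ c, le_sup_right, sup_le x.2.2 hcb⟩ : Set.Icc c b)))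
    fun _ _ hxy => strictMono_inf_prod_sup (z := c) (Subtype.coe_lt_coe.mpr hxy)

lemma CovBy.wcovBy_sup_of_le {a b m : L} (ham : a ⋖ m) (hab : a ≤ b) : b ⩿ b ⊔ m := by
  rcases ham.eq_or_eq (le_inf hab ham.le) inf_le_right with h | h
  · exact (covBy_sup_of_inf_covBy_right (h ▸ ham)).wcovBy
  · rw [sup_eq_left.mpr (h ▸ inf_le_left)]
    exact WCovBy.refl b

lemma wellFoundedLT_Icc_sup_finset_sup [OrderBot L] {a : L} (u : Finset L)
    (hu : ∀ m ∈ u, a ⋖ m) : WellFoundedLT (Set.Icc a (a ⊔ u.sup id)) := by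
  induction u using Finset.cons_induction with
  | empty =>
    rw [Finset.sup_empty, sup_bot_eq]
    exact (WCovBy.refl a).wellFoundedLT_Icc
  | cons m u hm ih =>
    have := ih fun x hx => hu x (Finset.mem_cons_of_mem hx)
    have := ((hu m (Finset.mem_cons_self m u)).wcovBy_sup_of_le
      (le_sup_left : a ≤ a ⊔ u.sup id)).wellFoundedLT_Icc
    have hsup : a ⊔ (u.cons m hm).sup id = a ⊔ u.sup id ⊔ m := by
      simp only [Finset.sup_cons, id]
      ac_rfl
    rw [hsup]
    exact wellFoundedLT_Icc_trans le_sup_left le_sup_left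

end Interval

lemma wellFoundedLT_Icc_sup_sSup_covBy {L : Type*} [CompleteLattice L] [IsModularLattice L]
    [WellFoundedGT L] (a : L) : WellFoundedLT (Set.Icc a (a ⊔ sSup {m | a ⋖ m})) := by
  obtain ⟨t, ht, hsup⟩ := CompleteLattice.WellFoundedGT.isSupFiniteCompact L {m | a ⋖ m}
  rw [hsup]
  exact wellFoundedLT_Icc_sup_finset_sup t ht

/-- A complete modular Noetherian lattice which is hyper-semiatomic is Artinian.
Here `s 0 = ⊥` and `s (n+1)` is the supremum, inside the interval `[s n, ⊤]`, of the
set of atoms of that interval (so `s (n+1) = s n` if there are no such atoms). -/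
theorem stmt_8 {L : Type*} [CompleteLattice L] [IsModularLattice L]
    (hnoeth : WellFounded ((· > ·) : L → L → Prop))
    (s : ℕ → L) (h0 : s 0 = ⊥)
    (hsucc : ∀ n, s (n + 1) = s n ⊔ sSup {m : L | s n < m ∧ ¬ ∃ x, s n < x ∧ x < m})
    (hfull : ∃ n, s n = ⊤) :
    WellFounded ((· < ·) : L → L → Prop) := by
  have : WellFoundedGT L := ⟨hnoeth⟩
  have hcov (n : ℕ) : s (n + 1) = s n ⊔ sSup {m | s n ⋖ m} := by
    simp only [hsucc n, CovBy, not_exists, not_and]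
  have hIcc (n : ℕ) : WellFoundedLT (Set.Icc ⊥ (s n)) := by
    induction n with
    | zero => rw [h0]; exact (WCovBy.refl ⊥).wellFoundedLT_Icc
    | succ n ih =>
      have := wellFoundedLT_Icc_sup_sSup_covBy (s n)
      rw [hcov n]
      exact wellFoundedLT_Icc_trans bot_le le_sup_left
  obtain ⟨n, hn⟩ := hfull
  have := hIcc n
  rw [hn] at this
  exact (StrictMono.wellFoundedLT (f := fun x : L => (⟨x, bot_le, le_top⟩ : Set.Icc ⊥ ⊤))
    fun _ _ hxy => hxy).wf
end

section
/- Let R be a left Artinian ring (with identity). Then the complete lattice L of left ideals of R (i.e., of submodules of R as a left module over itself) is hyper-radical free: defining r : ℕ → L by r(0) = ⊤ and r(n+1) = the infimum of the set of all coatoms of the interval [⊥, r(n)] in L, there exists n ∈ ℕ with r(n) = ⊥. -/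
theorem exists_eq_bot_of_le_of_covBy {α : Type*} [PartialOrder α] [OrderBot α]
    [WellFoundedLT α] [IsStronglyCoatomic α] (r : ℕ → α)
    (hr : ∀ n m, m ⋖ r n → r (n + 1) ≤ m) : ∃ n, r n = ⊥ := by
  obtain ⟨_, ⟨n, rfl⟩, hmin⟩ := wellFounded_lt.has_min (Set.range r) ⟨r 0, 0, rfl⟩
  refine ⟨n, by_contra fun hne => ?_⟩
  obtain ⟨m, -, hm⟩ := exists_le_covBy_of_lt (bot_lt_iff_ne_bot.mpr hne)
  exact hmin _ ⟨n + 1, rfl⟩ ((hr n m hm).trans_lt hm.lt)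

theorem stmt_12_general (R : Type*) [Ring R] [IsArtinianRing R]
    (r : ℕ → Submodule R R)
    (hsucc : ∀ n, r (n + 1) =
      r n ⊓ sInf {m : Submodule R R | m < r n ∧ ¬ ∃ x, m < x ∧ x < r n}) :
    ∃ n, r n = ⊥ := by
  -- Lower covers exist by Hopkins–Levitzki: the Artinian ring `R` is also Noetherian.
  refine exists_eq_bot_of_le_of_covBy r fun n m hm => ?_
  rw [hsucc]
  exact inf_le_right.trans (sInf_le ⟨hm.lt, fun ⟨_, hmx, hxr⟩ => hm.2 hmx hxr⟩)

/-- The lattice of left ideals of a left Artinian ring is hyper-radical free: the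
iterated radical series `r 0 = ⊤`, `r (n+1) = ` infimum inside `[⊥, r n]` of the set
of coatoms of the interval `[⊥, r n]` (equal to `r n` if there are none), reaches `⊥`
after finitely many steps. -/
theorem stmt_12 (R : Type*) [Ring R] [IsArtinianRing R]
    (r : ℕ → Submodule R R) (h0 : r 0 = ⊤)
    (hsucc : ∀ n, r (n + 1) =
      r n ⊓ sInf {m : Submodule R R | m < r n ∧ ¬ ∃ x, m < x ∧ x < r n}) :
    ∃ n, r n = ⊥ :=
  stmt_12_general R r hsucc
end
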